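/- The tree unravelling functor R_k : K → T_k is right adjoint to the inclusion of the category T_k of synchronization trees of height at most k into the category K of Kripke models; in particular T_k is a coreflective subcategory of K. -/

import Mathlib

/-- A (pointed) Kripke model over a set `V` of propositional variables. -/
structure Kripke (V : Type) where
  World : Type
  R : World → World → Prop
  val : V → World → Prop
  pt : World

/-- A homomorphism of Kripke models. -/
structure KHom {V : Type} (A B : Kripke V) where
  toFun : A.World → B.World
  map_rel : ∀ x y, A.R x y → B.R (toFun x) (toFun y)
  map_val : ∀ p x, A.val p x → B.val p (toFun x)
  map_pt : toFun A.pt = B.pt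

namespace KHom

variable {V : Type} {A B C : Kripke V}

/-- Composition of homomorphisms of Kripke models. -/
def comp (g : KHom B C) (f : KHom A B) : KHom A C where
  toFun := g.toFun ∘ f.toFun
  map_rel := fun x y h => g.map_rel _ _ (f.map_rel _ _ h)
  map_val := fun p x h => g.map_val _ _ (f.map_val _ _ h)
  map_pt := by simp [f.map_pt, g.map_pt]

/-- A pathwise embedding: a homomorphism reflecting the unary predicates. -/
def Pathwise (f : KHom A B) : Prop :=
  ∀ p x, B.val p (f.toFun x) → A.val p x

/-- An embedding: an injective homomorphism reflecting the unary predicates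
and the accessibility relation. -/
def IsEmbedding (f : KHom A B) : Prop :=
  Function.Injective f.toFun ∧ f.Pathwise ∧
    ∀ x y, B.R (f.toFun x) (f.toFun y) → A.R x y

/-- A p-morphism: a pathwise embedding satisfying the back condition. -/
def IsPMorphism (f : KHom A B) : Prop :=
  f.Pathwise ∧ ∀ x y, B.R (f.toFun x) y → ∃ x', A.R x x' ∧ f.toFun x' = y

end KHom

/-- `IsPath A l x` : `l` is a finite R-path from the distinguished element of `A` to `x`. -/
def IsPath {V : Type} (A : Kripke V) (l : List A.World) (x : A.World) : Prop :=
  l.head? = some A.pt ∧ l.getLast? = some x ∧ l.Chain' A.R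

/-- A synchronization tree: every element is reachable from the distinguished
element by a unique finite path along the accessibility relation. -/
def IsSyncTree {V : Type} (A : Kripke V) : Prop :=
  ∀ x, ∃! l, IsPath A l x

/-- Height at most `k`: every path from the root makes at most `k` steps
(i.e. has at most `k+1` elements). -/
def HeightLE {V : Type} (A : Kripke V) (k : ℕ∞) : Prop :=
  ∀ l x, IsPath A l x → (l.length : ℕ∞) ≤ k + 1

/-- A path model: the elements form a finite R-chain starting at the
distinguished element, with no other R-edges. -/
def IsPathModel {V : Type} (A : Kripke V) : Prop :=
  ∃ l : List A.World, l ≠ [] ∧ l.Nodup ∧ l.head? = some A.pt ∧ (∀ x, x ∈ l) ∧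
    ∀ x y, A.R x y ↔ ∃ i, l[i]? = some x ∧ l[i + 1]? = some y

/-- Modal formulas. -/
inductive MF (V : Type) where
  | top | bot
  | var (p : V)
  | neg (φ : MF V)
  | and (φ ψ : MF V)
  | or (φ ψ : MF V)
  | box (φ : MF V)
  | dia (φ : MF V)

/-- Kripke semantics of modal formulas. -/
def Sat {V : Type} (A : Kripke V) (w : A.World) : MF V → Prop
  | .top => True
  | .bot => False
  | .var p => A.val p w
  | .neg φ => ¬ Sat A w φ
  | .and φ ψ => Sat A w φ ∧ Sat A w ψ
  | .or φ ψ => Sat A w φ ∨ Sat A w ψ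
  | .box φ => ∀ x, A.R w x → Sat A x φ
  | .dia φ => ∃ x, A.R w x ∧ Sat A x φ

/-- Modal depth: the maximal nesting of modalities. -/
def MF.depth {V : Type} : MF V → ℕ
  | .top => 0
  | .bot => 0
  | .var _ => 0
  | .neg φ => φ.depth
  | .and φ ψ => max φ.depth ψ.depth
  | .or φ ψ => max φ.depth ψ.depth
  | .box φ => φ.depth + 1
  | .dia φ => φ.depth + 1

/-- Existential modal formulas: no `□`, negations only on propositional variables. -/
inductive MF.IsExistential {V : Type} : MF V → Prop
  | top : MF.IsExistential .top
  | bot : MF.IsExistential .bot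
  | var (p : V) : MF.IsExistential (.var p)
  | negvar (p : V) : MF.IsExistential (.neg (.var p))
  | and {φ ψ} : MF.IsExistential φ → MF.IsExistential ψ → MF.IsExistential (.and φ ψ)
  | or {φ ψ} : MF.IsExistential φ → MF.IsExistential ψ → MF.IsExistential (.or φ ψ)
  | dia {φ} : MF.IsExistential φ → MF.IsExistential (.dia φ)

/-- The tree unravelling of a Kripke model to depth `k`. -/
def Unravel {V : Type} (A : Kripke V) (k : ℕ∞) : Kripke V where
  World := { l : List A.World // l ≠ [] ∧ l.head? = some A.pt ∧ l.Chain' A.R ∧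
    (l.length : ℕ∞) ≤ k + 1 }
  R s t := ∃ x, t.val = s.val ++ [x]
  val p s := ∃ x, s.val.getLast? = some x ∧ A.val p x
  pt := ⟨[A.pt], by simp, by simp, List.isChain_singleton _, by simp⟩

/-- The projection from the unravelling, sending a sequence to its last element. -/
def projFun {V : Type} (A : Kripke V) (k : ℕ∞) : (Unravel A k).World → A.World :=
  fun s => s.val.getLast s.prop.1

/-!
A homomorphism `f : T → R_k A` sends `R`-steps to one-step extensions of sequences, so by
induction along a path `[t₀, …, tⱼ]` from the root of `T` to `x`, the sequence `f x` is
`[π (f t₀), …, π (f tⱼ)]`, where `π : R_k A → A` takes the last element. Hence `f` is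
determined by `π ∘ f`. Conversely, when `T` is a synchronization tree of height at most `k`,
sending `x` to the image under `g` of its unique root path defines a lift of any `g : T → A`.
-/

@[ext]
lemma KHom.ext {V : Type} {A B : Kripke V} {f g : KHom A B} (h : f.toFun = g.toFun) :
    f = g := by
  cases f; cases g; subst h; rfl

namespace IsPath

variable {V : Type} {A : Kripke V} {l : List A.World} {x y : A.World}

lemma ne_nil (h : IsPath A l x) : l ≠ [] := by
  rintro rfl
  simp [IsPath] at h

lemma getLast_eq (h : IsPath A l x) : l.getLast h.ne_nil = x :=
  Option.some.inj ((List.getLast?_eq_some_getLast h.ne_nil).symm.trans h.2.1)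

lemma eq_of_snoc (h : IsPath A (l ++ [y]) x) : x = y := by
  simpa [eq_comm] using h.2.1

lemma eq_pt_of_singleton (h : IsPath A [y] x) : y = A.pt := by
  simpa using h.1

lemma snoc (h : IsPath A l x) (hr : A.R x y) : IsPath A (l ++ [y]) y := by
  refine ⟨by rw [List.head?_append_of_ne_nil l h.ne_nil]; exact h.1, List.getLast?_concat, ?_⟩
  refine List.isChain_append.2 ⟨h.2.2, List.isChain_singleton y, ?_⟩
  rintro a ha b hb
  rw [Option.mem_def, h.2.1, Option.some.injEq] at ha
  simp only [List.head?_cons, Option.mem_def, Option.some.injEq] at hb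
  exact ha ▸ hb ▸ hr

lemma of_snoc (h : IsPath A (l ++ [y]) x) (hl : l ≠ []) :
    IsPath A l (l.getLast hl) ∧ A.R (l.getLast hl) y := by
  obtain ⟨hhead, -, hchain⟩ := h
  obtain ⟨hchain, -, hlink⟩ := List.isChain_append.1 hchain
  refine ⟨⟨?_, List.getLast?_eq_some_getLast hl, hchain⟩, ?_⟩
  · rwa [List.head?_append_of_ne_nil l hl] at hhead
  · exact hlink _ (List.getLast?_eq_some_getLast hl) y rfl

lemma map {B : Kripke V} (g : KHom A B) (h : IsPath A l x) :
    IsPath B (l.map g.toFun) (g.toFun x) := by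
  refine ⟨?_, ?_, (List.isChain_map _).2 (h.2.2.imp fun a b => g.map_rel a b)⟩
  · rw [List.head?_map, h.1, Option.map_some, g.map_pt]
  · rw [List.getLast?_map, h.2.1, Option.map_some]

end IsPath

namespace IsSyncTree

variable {V : Type} {T : Kripke V} (hT : IsSyncTree T)

noncomputable def path (x : T.World) : List T.World :=
  (hT x).exists.choose

lemma isPath_path (x : T.World) : IsPath T (hT.path x) x :=
  (hT x).exists.choose_spec

lemma path_eq {l : List T.World} {x : T.World} (h : IsPath T l x) : hT.path x = l :=
  (hT x).unique (hT.isPath_path x) h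

lemma path_pt : hT.path T.pt = [T.pt] :=
  hT.path_eq ⟨rfl, rfl, List.isChain_singleton _⟩

lemma path_of_rel {x y : T.World} (hr : T.R x y) : hT.path y = hT.path x ++ [y] :=
  hT.path_eq ((hT.isPath_path x).snoc hr)

end IsSyncTree

namespace Unravel

variable {V : Type} {A T : Kripke V} {k : ℕ∞}

lemma isPath (s : (Unravel A k).World) : IsPath A s.val (projFun A k s) :=
  ⟨s.prop.2.1, List.getLast?_eq_some_getLast s.prop.1, s.prop.2.2.1⟩

def ofPath {l : List A.World} {x : A.World} (h : IsPath A l x)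
    (hk : (l.length : ℕ∞) ≤ k + 1) : (Unravel A k).World :=
  ⟨l, h.ne_nil, h.1, h.2.2, hk⟩

lemma projFun_eq_of_val_eq_snoc {s t : (Unravel A k).World} {x : A.World}
    (h : t.val = s.val ++ [x]) : projFun A k t = x := by
  have ht := isPath t
  rw [h] at ht
  exact ht.eq_of_snoc

variable (A k) in
def proj : KHom (Unravel A k) A where
  toFun := projFun A k
  map_rel := by
    rintro s t ⟨x, hx⟩
    have ht := isPath t
    rw [hx] at ht
    rw [projFun_eq_of_val_eq_snoc hx]
    exact (ht.of_snoc s.prop.1).2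
  map_val := by
    rintro p s ⟨x, hx, hp⟩
    rwa [Option.some.inj ((isPath s).2.1.symm.trans hx)]
  map_pt := rfl

lemma val_eq_map_of_isPath (f : KHom T (Unravel A k)) {l : List T.World} {x : T.World}
    (hl : IsPath T l x) : (f.toFun x).val = l.map (projFun A k ∘ f.toFun) := by
  induction l using List.reverseRecOn generalizing x with
  | nil => exact absurd rfl hl.ne_nil
  | append_singleton l y ih =>
    obtain rfl := hl.eq_of_snoc
    rcases eq_or_ne l [] with rfl | hne
    · obtain rfl := hl.eq_pt_of_singleton
      rw [List.nil_append, List.map_singleton, Function.comp_apply, f.map_pt]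
      rfl
    · obtain ⟨hpath, hr⟩ := hl.of_snoc hne
      obtain ⟨b, hb⟩ := f.map_rel _ _ hr
      rw [List.map_append, ← ih hpath, hb, ← projFun_eq_of_val_eq_snoc hb]
      rfl

noncomputable def lift (hT : IsSyncTree T) (hH : HeightLE T k) (g : KHom T A) :
    KHom T (Unravel A k) where
  toFun x := ofPath ((hT.isPath_path x).map g)
    (by rw [List.length_map]; exact hH _ _ (hT.isPath_path x))
  map_rel x y hr := ⟨g.toFun y, by
    change (hT.path y).map g.toFun = (hT.path x).map g.toFun ++ [g.toFun y]
    rw [hT.path_of_rel hr, List.map_append, List.map_singleton]⟩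
  map_val p x hp := ⟨g.toFun x, ((hT.isPath_path x).map g).2.1, g.map_val p x hp⟩
  map_pt := Subtype.ext (by
    change (hT.path T.pt).map g.toFun = [A.pt]
    rw [hT.path_pt, List.map_singleton, g.map_pt])

lemma proj_comp_lift (hT : IsSyncTree T) (hH : HeightLE T k) (g : KHom T A) :
    (proj A k).comp (lift hT hH g) = g :=
  KHom.ext (funext fun x => ((hT.isPath_path x).map g).getLast_eq)

lemma eq_lift_of_proj_comp (hT : IsSyncTree T) (hH : HeightLE T k) {g : KHom T A}
    (f : KHom T (Unravel A k)) (hf : (proj A k).comp f = g) : f = lift hT hH g := by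
  ext x : 2
  refine Subtype.ext ?_
  rw [val_eq_map_of_isPath f (hT.isPath_path x), ← hf]
  rfl

end Unravel

/-- The tree unravelling functor `R_k` is right adjoint to the inclusion
of synchronization trees of height at most `k` into Kripke models: the projection
`R_k A → A` is a homomorphism, and composition with it gives a bijection between
homomorphisms `T → R_k A` and homomorphisms `T → A`, for every synchronization tree
`T` of height at most `k` (i.e. `T_k` is coreflective in `K`). -/
theorem stmt3 {V : Type} (k : ℕ∞) (A : Kripke V) :
    ∃ p : KHom (Unravel A k) A, p.toFun = projFun A k ∧
      ∀ T : Kripke V, IsSyncTree T → HeightLE T k →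
        ∀ g : KHom T A, ∃! h : KHom T (Unravel A k), p.comp h = g :=
  ⟨Unravel.proj A k, rfl, fun _ hT hH g =>
    ⟨Unravel.lift hT hH g, Unravel.proj_comp_lift hT hH g,
      fun f hf => Unravel.eq_lift_of_proj_comp hT hH f hf⟩⟩
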